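/- Let L be a finite lattice, π a dual atom of Con L, and p, q prime intervals of L with π not collapsing p and not collapsing q. Then con(p) ≤ con(q) or con(q) ≤ con(p), where con(r) denotes the smallest congruence collapsing the prime interval r. -/

import Mathlib

/-- A finite lattice is planar iff its order dimension is at most 2
(Baker–Fishburn–Roberts): the order is the intersection of two linear orders. -/
def IsPlanarLattice (L : Type*) [Lattice L] : Prop :=
  ∃ r₁ r₂ : L → L → Prop, IsLinearOrder L r₁ ∧ IsLinearOrder L r₂ ∧
    ∀ a b : L, a ≤ b ↔ r₁ a b ∧ r₂ a b

/-- Semimodularity: `a ⊓ b ⋖ a` implies `b ⋖ a ⊔ b`. -/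
def IsSemimodular (L : Type*) [Lattice L] : Prop :=
  ∀ a b : L, a ⊓ b ⋖ a → b ⋖ a ⊔ b

/-- A lattice contains a sublattice isomorphic to `M₃` iff it has three distinct
elements with pairwise equal meets and pairwise equal joins. -/
def HasM3Sublattice (L : Type*) [Lattice L] : Prop :=
  ∃ a b c : L, a ≠ b ∧ a ≠ c ∧ b ≠ c ∧
    a ⊓ b = a ⊓ c ∧ a ⊓ c = b ⊓ c ∧ a ⊔ b = a ⊔ c ∧ a ⊔ c = b ⊔ c

/-- A lattice congruence. -/
structure LatticeCongr (L : Type*) [Lattice L] where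
  r : L → L → Prop
  iseqv : Equivalence r
  sup_compat : ∀ {a b c d : L}, r a b → r c d → r (a ⊔ c) (b ⊔ d)
  inf_compat : ∀ {a b c d : L}, r a b → r c d → r (a ⊓ c) (b ⊓ d)

namespace LatticeCongr

variable {L : Type*} [Lattice L]

def toSetoid (α : LatticeCongr L) : Setoid L := ⟨α.r, α.iseqv⟩

/-- The quotient lattice `L/α`. -/
def Quot (α : LatticeCongr L) : Type _ := Quotient α.toSetoid

/-- The quotient map. -/
def mkQ (α : LatticeCongr L) (x : L) : α.Quot := Quotient.mk α.toSetoid x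

instance (α : LatticeCongr L) : Max α.Quot :=
  ⟨Quotient.map₂ (· ⊔ ·) fun _ _ h _ _ h' => α.sup_compat h h'⟩

instance (α : LatticeCongr L) : Min α.Quot :=
  ⟨Quotient.map₂ (· ⊓ ·) fun _ _ h _ _ h' => α.inf_compat h h'⟩

@[simp] theorem mkQ_sup (α : LatticeCongr L) (x y : L) :
    α.mkQ x ⊔ α.mkQ y = α.mkQ (x ⊔ y) := rfl

@[simp] theorem mkQ_inf (α : LatticeCongr L) (x y : L) :
    α.mkQ x ⊓ α.mkQ y = α.mkQ (x ⊓ y) := rfl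

instance (α : LatticeCongr L) : Lattice α.Quot :=
  Lattice.mk'
    (fun a b => Quotient.inductionOn₂ a b fun x y => congrArg _ (sup_comm x y))
    (fun a b c => Quotient.inductionOn₃ a b c fun x y z => congrArg _ (sup_assoc x y z))
    (fun a b => Quotient.inductionOn₂ a b fun x y => congrArg _ (inf_comm x y))
    (fun a b c => Quotient.inductionOn₃ a b c fun x y z => congrArg _ (inf_assoc x y z))
    (fun a b => Quotient.inductionOn₂ a b fun x y => congrArg _ (sup_inf_self (a := x) (b := y)))
    (fun a b => Quotient.inductionOn₂ a b fun x y => congrArg _ (inf_sup_self (a := x) (b := y)))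

theorem ext' {α β : LatticeCongr L} (h : ∀ a b, α.r a b ↔ β.r a b) : α = β := by
  have hr : α.r = β.r := funext fun a => funext fun b => propext (h a b)
  cases α; cases β; cases hr; rfl

instance : PartialOrder (LatticeCongr L) where
  le α β := ∀ ⦃a b : L⦄, α.r a b → β.r a b
  le_refl _ _ _ h := h
  le_trans _ _ _ h h' _ _ hab := h' (h hab)
  le_antisymm _ _ h h' := ext' fun a b => ⟨fun hab => h hab, fun hab => h' hab⟩

instance : OrderTop (LatticeCongr L) where
  top := ⟨fun _ _ => True, ⟨fun _ => trivial, fun _ => trivial, fun _ _ => trivial⟩,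
    fun _ _ => trivial, fun _ _ => trivial⟩
  le_top _ _ _ _ := trivial

instance : OrderBot (LatticeCongr L) where
  bot := ⟨Eq, eq_equivalence, fun h h' => by rw [h, h'], fun h h' => by rw [h, h']⟩
  bot_le _ _ _ h := h ▸ (Equivalence.refl (iseqv _) _)

instance : InfSet (LatticeCongr L) where
  sInf S :=
    ⟨fun a b => ∀ θ ∈ S, θ.r a b,
     ⟨fun _ θ _ => θ.iseqv.refl _,
      fun h θ hθ => θ.iseqv.symm (h θ hθ),
      fun h h' θ hθ => θ.iseqv.trans (h θ hθ) (h' θ hθ)⟩,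
     fun h h' θ hθ => θ.sup_compat (h θ hθ) (h' θ hθ),
     fun h h' θ hθ => θ.inf_compat (h θ hθ) (h' θ hθ)⟩

/-- The principal congruence generated by collapsing the pair `(a, b)`. -/
def conPair (a b : L) : LatticeCongr L := sInf {θ : LatticeCongr L | θ.r a b}

end LatticeCongr

/-- A distributive lattice (as a property). -/
def IsDistribQuot (X : Type*) [Lattice X] : Prop :=
  ∀ x y z : X, x ⊓ (y ⊔ z) = x ⊓ y ⊔ x ⊓ z

/-- A prime ideal of a lattice, as a set. -/
def IsPrimeIdealSet {L : Type*} [Lattice L] (P : Set L) : Prop :=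
  P.Nonempty ∧ P ≠ Set.univ ∧
  (∀ x y : L, x ≤ y → y ∈ P → x ∈ P) ∧
  (∀ x y : L, x ∈ P → y ∈ P → x ⊔ y ∈ P) ∧
  (∀ x y : L, x ⊓ y ∈ P → x ∈ P ∨ y ∈ P)


/-!
For a prime interval `c ⋖ d`, the join of all congruences not collapsing `[c, d]` still does not
collapse it, so it is the largest such congruence. A coatom `π` of `Con L` not collapsing `[c, d]`
is therefore this join. If `con(c, d) ≰ con(a, b)`, then `con(a, b)` does not collapse `[c, d]`,
so `con(a, b) ≤ π` and `π` collapses `[a, b]`. Hence `con(c, d) ≤ con(a, b)` whenever `π`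
collapses neither interval.
-/

theorem Relation.ReflTransGen.map₂ {α : Type*} {r : α → α → Prop} (f : α → α → α)
    (hl : ∀ {u v} w, r u v → r (f u w) (f v w)) (hr : ∀ {u v} w, r u v → r (f w u) (f w v))
    {x y u v : α} (hxy : Relation.ReflTransGen r x y) (huv : Relation.ReflTransGen r u v) :
    Relation.ReflTransGen r (f x u) (f y v) :=
  (hxy.lift (f · u) fun _ _ => hl u).trans (huv.lift (f y ·) fun _ _ => hr y)

namespace LatticeCongr

variable {L : Type*} [Lattice L]

def unionRel (S : Set (LatticeCongr L)) (u v : L) : Prop :=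
  ∃ σ ∈ S, σ.r u v

instance : SupSet (LatticeCongr L) where
  sSup S :=
    { r := Relation.ReflTransGen (unionRel S)
      iseqv := by
        have : Std.Symm (unionRel S) := ⟨fun _ _ ⟨σ, hσ, h⟩ => ⟨σ, hσ, σ.iseqv.symm h⟩⟩
        exact ⟨fun _ => .refl, Std.Symm.symm _ _, .trans⟩
      sup_compat := Relation.ReflTransGen.map₂ (· ⊔ ·)
        (fun w ⟨σ, hσ, h⟩ => ⟨σ, hσ, σ.sup_compat h (σ.iseqv.refl w)⟩)
        (fun w ⟨σ, hσ, h⟩ => ⟨σ, hσ, σ.sup_compat (σ.iseqv.refl w) h⟩)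
      inf_compat := Relation.ReflTransGen.map₂ (· ⊓ ·)
        (fun w ⟨σ, hσ, h⟩ => ⟨σ, hσ, σ.inf_compat h (σ.iseqv.refl w)⟩)
        (fun w ⟨σ, hσ, h⟩ => ⟨σ, hσ, σ.inf_compat (σ.iseqv.refl w) h⟩) }

theorem sSup_r (S : Set (LatticeCongr L)) : (sSup S).r = Relation.ReflTransGen (unionRel S) :=
  rfl

theorem le_sSup {S : Set (LatticeCongr L)} {σ : LatticeCongr L} (hσ : σ ∈ S) : σ ≤ sSup S :=
  fun _ _ h => Relation.ReflTransGen.single ⟨σ, hσ, h⟩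

theorem conPair_le_iff {a b : L} {θ : LatticeCongr L} : conPair a b ≤ θ ↔ θ.r a b :=
  ⟨fun h => h fun _ hθ => hθ, fun h _ _ hr => hr θ h⟩

theorem sup_inf_eq_of_rel {a b y w : L} {σ : LatticeCongr L} (hab : a ⋖ b) (hσ : ¬ σ.r a b)
    (hyw : σ.r y w) (hy : (y ⊔ a) ⊓ b = a) : (w ⊔ a) ⊓ b = a := by
  have hrel : σ.r ((y ⊔ a) ⊓ b) ((w ⊔ a) ⊓ b) :=
    σ.inf_compat (σ.sup_compat hyw (σ.iseqv.refl a)) (σ.iseqv.refl b)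
  rw [hy] at hrel
  refine (hab.eq_or_eq (le_inf le_sup_right hab.le) inf_le_right).resolve_right fun hb => ?_
  exact hσ (hb ▸ hrel)

theorem not_rel_sSup_of_covBy {a b : L} (hab : a ⋖ b) :
    ¬ (sSup {σ : LatticeCongr L | ¬ σ.r a b}).r a b := by
  rw [sSup_r]
  intro h
  -- The projection `z ↦ (z ⊔ a) ⊓ b` onto `[a, b]` stays at `a` along every chain from `a`.
  have key : ∀ z, Relation.ReflTransGen (unionRel {σ : LatticeCongr L | ¬ σ.r a b}) a z →
      (z ⊔ a) ⊓ b = a := by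
    intro z hz
    induction hz with
    | refl => simp [hab.le]
    | tail _ hstep ih =>
      obtain ⟨σ, hσ, hyw⟩ := hstep
      exact sup_inf_eq_of_rel hab hσ hyw ih
  exact hab.ne' (by simpa using key b h)

theorem eq_sSup_of_isCoatom {π : LatticeCongr L} (hπ : IsCoatom π) {a b : L} (hab : a ⋖ b)
    (h : ¬ π.r a b) : π = sSup {σ : LatticeCongr L | ¬ σ.r a b} := by
  refine (le_sSup h).eq_or_lt.resolve_right fun hlt => not_rel_sSup_of_covBy hab ?_
  rw [hπ.2 _ hlt]
  trivial

theorem conPair_le_conPair_of_isCoatom {π : LatticeCongr L} (hπ : IsCoatom π) {a b c d : L}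
    (hcd : c ⋖ d) (hπab : ¬ π.r a b) (hπcd : ¬ π.r c d) : conPair c d ≤ conPair a b := by
  rw [conPair_le_iff]
  by_contra hne
  have hle : conPair a b ≤ π := eq_sSup_of_isCoatom hπ hcd hπcd ▸ le_sSup hne
  exact hπab (conPair_le_iff.1 hle)

end LatticeCongr

theorem coatom_prime_interval_congruences_comparable_general {L : Type*} [Lattice L]
    (pi : LatticeCongr L) (hpi : IsCoatom pi)
    (a b c d : L) (hcd : c ⋖ d)
    (h1 : ¬ pi.r a b) (h2 : ¬ pi.r c d) :
    LatticeCongr.conPair a b ≤ LatticeCongr.conPair c d ∨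
    LatticeCongr.conPair c d ≤ LatticeCongr.conPair a b :=
  Or.inr (LatticeCongr.conPair_le_conPair_of_isCoatom hpi hcd h1 h2)

/-- For a dual atom `π` of `Con L` and prime intervals `p = [a, b]`, `q = [c, d]`
not collapsed by `π`, the principal congruences `con(p)` and `con(q)` are comparable. -/
theorem coatom_prime_interval_congruences_comparable {L : Type*} [Lattice L] [Fintype L]
    (pi : LatticeCongr L) (hpi : IsCoatom pi)
    (a b c d : L) (hab : a ⋖ b) (hcd : c ⋖ d)
    (h1 : ¬ pi.r a b) (h2 : ¬ pi.r c d) :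
    LatticeCongr.conPair a b ≤ LatticeCongr.conPair c d ∨
    LatticeCongr.conPair c d ≤ LatticeCongr.conPair a b :=
  coatom_prime_interval_congruences_comparable_general pi hpi a b c d hcd h1 h2
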